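/- Let n ≥ 1 and let λ be a partition of n with part i occurring r_i times. Then Γ(λ) ⊆ PGL_n(ℂ) contains a pair (s,h) of commuting semisimple elements whose simultaneous centralizer {g ∈ Γ(λ) : gs = sg and gh = hg} is finite if and only if exactly one r_i is nonzero, i.e. λ is rectangular. Moreover, when λ = (k, k, …, k) with r parts (so n = kr), the group Γ(λ) is isomorphic to PGL_r(ℂ). -/

import Mathlib

/-- `PGL_n(ℂ)`: the quotient of `GL_n(ℂ)` by its center (the nonzero scalar matrices). -/
abbrev PGLn (n : ℕ) : Type :=
  GL (Fin n) ℂ ⧸ Subgroup.center (GL (Fin n) ℂ)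

/-- The permutation matrix `w_n` of the `n`-cycle: `w_n · e_j = e_{j+1}`, indices mod `n`. -/
def cycleMat (n : ℕ) [NeZero n] : Matrix (Fin n) (Fin n) ℂ :=
  Matrix.of fun i j : Fin n => if i = j + 1 then 1 else 0

/-- The diagonal matrix `s_n = diag(1, ζ, ζ², …, ζ^{n-1})`. -/
def diagZeta (n : ℕ) (ζ : ℂ) : Matrix (Fin n) (Fin n) ℂ :=
  Matrix.diagonal fun j : Fin n => ζ ^ (j : ℕ)

/-- An element of `PGL_n(ℂ)` is semisimple if it is the image of a diagonalizable
(invertible) matrix. -/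
def IsSemisimplePGL (n : ℕ) (x : PGLn n) : Prop :=
  ∃ A : GL (Fin n) ℂ,
    (∃ g : GL (Fin n) ℂ, ((g * A * g⁻¹ : GL (Fin n) ℂ) : Matrix (Fin n) (Fin n) ℂ).IsDiag) ∧
    QuotientGroup.mk A = x

open Kronecker in
/-- The block-diagonal matrix `⊕_i (x_i ⊗ Id_{i+1})` associated to a tuple
`x ∈ ∏_i Mat_{r_i}(ℂ)`; the index `i : Fin ℓ` stands for the part `i+1` of the
partition. -/
noncomputable def blockKron (ℓ : ℕ) (r : Fin ℓ → ℕ)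
    (x : (i : Fin ℓ) → Matrix (Fin (r i)) (Fin (r i)) ℂ) :
    Matrix ((i : Fin ℓ) × (Fin (r i) × Fin ((i : ℕ) + 1)))
      ((i : Fin ℓ) × (Fin (r i) × Fin ((i : ℕ) + 1))) ℂ :=
  Matrix.blockDiagonal' fun i =>
    (x i) ⊗ₖ (1 : Matrix (Fin ((i : ℕ) + 1)) (Fin ((i : ℕ) + 1)) ℂ)

/-- The subset `H(λ)` of `n×n` matrices of the block form `⊕_i (x_i ⊗ Id_i)`, transported
to `Fin n` via an identification `e` of the index sets. -/
noncomputable def Hlam (ℓ : ℕ) (r : Fin ℓ → ℕ) (n : ℕ)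
    (e : ((i : Fin ℓ) × (Fin (r i) × Fin ((i : ℕ) + 1))) ≃ Fin n) :
    Set (Matrix (Fin n) (Fin n) ℂ) :=
  Set.range fun x : (i : Fin ℓ) → Matrix (Fin (r i)) (Fin (r i)) ℂ =>
    Matrix.reindex e e (blockKron ℓ r x)

/-- `Γ(λ)`: the image of (the invertible elements of) `H(λ)` in `PGL_n(ℂ)`. -/
noncomputable def GammaLam (ℓ : ℕ) (r : Fin ℓ → ℕ) (n : ℕ)
    (e : ((i : Fin ℓ) × (Fin (r i) × Fin ((i : ℕ) + 1))) ≃ Fin n) :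
    Set (PGLn n) :=
  {p : PGLn n | ∃ A : GL (Fin n) ℂ,
    (A : Matrix (Fin n) (Fin n) ℂ) ∈ Hlam ℓ r n e ∧ QuotientGroup.mk A = p}

/-- An element of `Γ(λ)` is semisimple if it is the image of a diagonalizable matrix
in `H(λ)`. -/
noncomputable def IsSemisimpleGammaLam (ℓ : ℕ) (r : Fin ℓ → ℕ) (n : ℕ)
    (e : ((i : Fin ℓ) × (Fin (r i) × Fin ((i : ℕ) + 1))) ≃ Fin n) (s : PGLn n) : Prop :=
  ∃ A : GL (Fin n) ℂ, (A : Matrix (Fin n) (Fin n) ℂ) ∈ Hlam ℓ r n e ∧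
    (∃ g : GL (Fin n) ℂ, ((g * A * g⁻¹ : GL (Fin n) ℂ) : Matrix (Fin n) (Fin n) ℂ).IsDiag) ∧
    QuotientGroup.mk A = s


/-!
If two different parts occur in `λ`, the scalars on one isotypic block (and `1` on the others)
form a copy of `ℂˣ` that is central in `Γ(λ)` and injects into `PGL_n(ℂ)`, so every centralizer
in `Γ(λ)` is infinite.

If `λ` is rectangular, `x ↦ x ⊗ Id` identifies `Γ(λ)` with `GL_q(ℂ)` modulo scalars. Take the
clock matrix `s = diag(1, ξ, …, ξ^{q-1})` and the shift `h`, where `ξ` is a primitive `q`-th root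
of unity: they commute up to `ξ`, and the Vandermonde matrix of `1, ξ, …, ξ^{q-1}` conjugates `h`
to `s`. A nonzero matrix that commutes with `s` up to a scalar lives on one shifted diagonal;
if it also commutes with `h` up to a scalar, its entries along that diagonal form a geometric
progression. So it is a multiple of some `h^m s^j`, and the joint centralizer has at most `q²`
elements.
-/

open Matrix QuotientGroup Function
open scoped Kronecker

section MatrixAlgHom

variable (R : Type*) [CommSemiring R]

def Matrix.kroneckerOneAlgHom (m k : Type*) [Fintype m] [DecidableEq m] [Fintype k]
    [DecidableEq k] : Matrix m m R →ₐ[R] Matrix (m × k) (m × k) R where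
  toFun x := x ⊗ₖ 1
  map_one' := one_kronecker_one
  map_mul' x y := by rw [← mul_kronecker_mul, one_mul]
  map_zero' := zero_kronecker 1
  map_add' x y := add_kronecker x y 1
  commutes' c := by simp [Algebra.algebraMap_eq_smul_one, smul_kronecker]

def Matrix.blockDiagonal'AlgHom {o : Type*} [Fintype o] [DecidableEq o] (m : o → Type*)
    [∀ i, Fintype (m i)] [∀ i, DecidableEq (m i)] :
    ((i : o) → Matrix (m i) (m i) R) →ₐ[R] Matrix ((i : o) × m i) ((i : o) × m i) R :=
  { blockDiagonal'RingHom m R with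
    commutes' c := by simp [Algebra.algebraMap_eq_smul_one, blockDiagonal'_smul] }

variable {R}

theorem Matrix.kroneckerOneAlgHom_injective {m k : Type*} [Fintype m] [DecidableEq m]
    [Fintype k] [DecidableEq k] [Nonempty k] : Injective (kroneckerOneAlgHom R m k) := by
  intro x y hxy
  obtain ⟨c⟩ := ‹Nonempty k›
  ext a b
  simpa [kroneckerOneAlgHom] using congrFun₂ hxy (a, c) (b, c)

theorem Matrix.IsDiag.blockDiagonal' {o : Type*} [DecidableEq o] {m : o → Type*}
    {M : (i : o) → Matrix (m i) (m i) R} (hM : ∀ i, (M i).IsDiag) :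
    (blockDiagonal' M).IsDiag := by
  rintro ⟨i, a⟩ ⟨j, b⟩ hab
  by_cases hij : i = j
  · subst hij
    rw [blockDiagonal'_apply_eq]
    exact hM i fun h => hab (by rw [h])
  · exact blockDiagonal'_apply_ne M a b hij

end MatrixAlgHom

theorem isUnit_of_isUnit_map_of_injective {R S : Type*} [Ring R] [IsArtinianRing R] [Ring S]
    (f : R →+* S) (hf : Injective f) {x : R} (hx : IsUnit (f x)) : IsUnit x :=
  IsArtinianRing.isUnit_iff_isRightRegular.mpr fun y y' hyy' =>
    hf (hx.mul_left_inj.mp (by simpa using congrArg f hyy'))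

theorem infinite_units_of_infinite (K : Type*) [Field K] [Infinite K] : Infinite Kˣ :=
  have : Infinite {x : K // x ≠ 0} := (Set.finite_singleton (0 : K)).infinite_compl.to_subtype
  Infinite.of_injective _ unitsEquivNeZero.symm.injective

section ProjectiveLinearGroup

local notation "PGL(" n ", " K ")" => GL n K ⧸ Subgroup.center (GL n K)

variable {K n : Type*} [Field K] [Fintype n] [DecidableEq n]

theorem mk_eq_mk_iff_exists_val_eq_smul {A B : GL n K} :
    (mk A : PGL(n, K)) = mk B ↔
      ∃ c : K, (A : Matrix n n K) = c • (B : Matrix n n K) := by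
  rw [eq_comm, QuotientGroup.eq, GeneralLinearGroup.mem_center_iff_val_mem_range_scalar]
  refine exists_congr fun c => ?_
  rw [scalar_apply, ← smul_one_eq_diagonal]
  constructor
  · intro hc
    calc (A : Matrix n n K) = B * ↑(B⁻¹ * A) := by simp [← mul_assoc]
      _ = c • B := by rw [← hc, Matrix.mul_smul, mul_one]
  · intro hc
    rw [Units.val_mul, hc, Matrix.mul_smul, ← Units.val_mul, inv_mul_cancel, Units.val_one]

theorem mk_mul_comm_iff_exists_mul_eq_smul {A B : GL n K} :
    (mk A : PGL(n, K)) * mk B = mk B * mk A ↔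
      ∃ c : K, (A : Matrix n n K) * B = c • ((B : Matrix n n K) * A) := by
  simp only [← mk_mul, mk_eq_mk_iff_exists_val_eq_smul, Units.val_mul]

variable {A : Type*} [Ring A] [Algebra K A]

def pglMap (κ : A →ₐ[K] Matrix n n K) : Aˣ →* PGL(n, K) :=
  (QuotientGroup.mk' _).comp (Units.map κ.toMonoidHom)

theorem pglMap_apply (κ : A →ₐ[K] Matrix n n K) (u : Aˣ) :
    pglMap κ u = mk (Units.map κ.toMonoidHom u) := rfl

variable {κ : A →ₐ[K] Matrix n n K}

theorem mem_ker_pglMap_iff (hκ : Injective κ) {u : Aˣ} :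
    u ∈ (pglMap κ).ker ↔ (u : A) ∈ Set.range (algebraMap K A) := by
  rw [MonoidHom.mem_ker, pglMap_apply, QuotientGroup.eq_one_iff,
    GeneralLinearGroup.mem_center_iff_val_mem_range_scalar]
  refine exists_congr fun c => ?_
  rw [← hκ.eq_iff, AlgHom.commutes]
  exact Iff.rfl

theorem setOf_mk_mem_range_eq_range_pglMap [IsArtinianRing A] (hκ : Injective κ) :
    {p : PGL(n, K) | ∃ B : GL n K, (B : Matrix n n K) ∈ Set.range κ ∧ mk B = p} =
      Set.range (pglMap κ) := by
  ext p
  constructor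
  · rintro ⟨B, ⟨x, hx⟩, rfl⟩
    have hu : IsUnit x := isUnit_of_isUnit_map_of_injective κ.toRingHom hκ (hx ▸ B.isUnit)
    exact ⟨hu.unit, congrArg mk (Units.ext hx)⟩
  · rintro ⟨u, rfl⟩
    exact ⟨Units.map κ.toMonoidHom u, ⟨u, rfl⟩, rfl⟩

theorem nonempty_closure_mk_mem_range_mulEquiv {m : Type*} [Fintype m] [DecidableEq m]
    {κ : Matrix m m K →ₐ[K] Matrix n n K} (hκ : Injective κ) :
    Nonempty (Subgroup.closure
        {p : PGL(n, K) | ∃ B : GL n K, (B : Matrix n n K) ∈ Set.range κ ∧ mk B = p} ≃*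
      PGL(m, K)) := by
  have hker : (pglMap κ).ker = Subgroup.center (GL m K) := by
    ext u
    rw [mem_ker_pglMap_iff hκ, GeneralLinearGroup.mem_center_iff_val_mem_range_scalar]
    exact Iff.rfl
  rw [setOf_mk_mem_range_eq_range_pglMap hκ, ← MonoidHom.coe_range, Subgroup.closure_eq]
  exact ⟨(quotientKerEquivRange (pglMap κ)).symm.trans (quotientMulEquivOfEq hker)⟩

end ProjectiveLinearGroup

section Blocks

variable {ℓ n : ℕ} {r : Fin ℓ → ℕ} (e : ((i : Fin ℓ) × (Fin (r i) × Fin ((i : ℕ) + 1))) ≃ Fin n)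

noncomputable def blockKronAlgHom :
    ((i : Fin ℓ) → Matrix (Fin (r i)) (Fin (r i)) ℂ) →ₐ[ℂ] Matrix (Fin n) (Fin n) ℂ :=
  (reindexAlgEquiv ℂ ℂ e).toAlgHom.comp <| (blockDiagonal'AlgHom ℂ _).comp <|
    AlgHom.pi fun i => (kroneckerOneAlgHom ℂ _ _).comp (Pi.evalAlgHom ℂ _ i)

theorem range_blockKronAlgHom : Set.range (blockKronAlgHom e) = Hlam ℓ r n e := rfl

theorem blockKronAlgHom_injective : Injective (blockKronAlgHom e) :=
  (reindexAlgEquiv ℂ ℂ e).injective.comp <| blockDiagonal'_injective.comp fun _ _ h =>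
    funext fun i => kroneckerOneAlgHom_injective (congrFun h i)

theorem isDiag_blockKronAlgHom {x : (i : Fin ℓ) → Matrix (Fin (r i)) (Fin (r i)) ℂ}
    (hx : ∀ i, (x i).IsDiag) : (blockKronAlgHom e x).IsDiag :=
  (IsDiag.blockDiagonal' fun i => (hx i).kronecker isDiag_one).submatrix e.symm.injective

noncomputable def blockScalar (i₁ : Fin ℓ) : ℂˣ →* PGLn n :=
  (pglMap (blockKronAlgHom e)).comp <| Units.map <|
    (MonoidHom.mulSingle _ i₁).comp (algebraMap ℂ (Matrix (Fin (r i₁)) (Fin (r i₁)) ℂ)).toMonoidHom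

theorem blockScalar_mem_gammaLam (i₁ : Fin ℓ) (t : ℂˣ) : blockScalar e i₁ t ∈ GammaLam ℓ r n e :=
  ⟨_, range_blockKronAlgHom e ▸ Set.mem_range_self _, rfl⟩

theorem blockScalar_mul_comm {g : PGLn n} (hg : g ∈ GammaLam ℓ r n e) (i₁ : Fin ℓ) (t : ℂˣ) :
    blockScalar e i₁ t * g = g * blockScalar e i₁ t := by
  obtain ⟨B, ⟨x, hx⟩, rfl⟩ := hg
  refine mk_mul_comm_iff_exists_mul_eq_smul.mpr ⟨1, ?_⟩
  rw [one_smul, ← hx]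
  change blockKronAlgHom e _ * blockKronAlgHom e x = blockKronAlgHom e x * blockKronAlgHom e _
  rw [← map_mul, ← map_mul]
  congr 1
  funext i
  by_cases hi : i = i₁
  · subst hi
    simp [Algebra.commutes]
  · simp [Pi.mulSingle_eq_of_ne hi]

theorem blockScalar_injective {i₀ i₁ : Fin ℓ} (hne : i₀ ≠ i₁) (h₀ : r i₀ ≠ 0) (h₁ : r i₁ ≠ 0) :
    Injective (blockScalar e i₁) := by
  have : NeZero (r i₀) := ⟨h₀⟩
  have : NeZero (r i₁) := ⟨h₁⟩
  refine (injective_iff_map_eq_one _).mpr fun t ht => ?_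
  rw [blockScalar, MonoidHom.comp_apply, ← MonoidHom.mem_ker,
    mem_ker_pglMap_iff (blockKronAlgHom_injective e)] at ht
  obtain ⟨c, hc⟩ := ht
  have hc₀ : algebraMap ℂ (Matrix (Fin (r i₀)) (Fin (r i₀)) ℂ) c = algebraMap ℂ _ 1 := by
    simpa [Pi.mulSingle_eq_of_ne hne] using congrFun hc i₀
  have hc₁ : algebraMap ℂ (Matrix (Fin (r i₁)) (Fin (r i₁)) ℂ) c = algebraMap ℂ _ t := by
    simpa using congrFun hc i₁
  rw [(algebraMap ℂ _).injective hc₀] at hc₁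
  exact Units.ext ((algebraMap ℂ _).injective hc₁).symm

theorem infinite_centralizer_of_two_parts {i₀ i₁ : Fin ℓ} (hne : i₀ ≠ i₁) (h₀ : r i₀ ≠ 0)
    (h₁ : r i₁ ≠ 0) {s h : PGLn n} (hs : s ∈ GammaLam ℓ r n e) (hh : h ∈ GammaLam ℓ r n e) :
    {g : PGLn n | g ∈ GammaLam ℓ r n e ∧ g * s = s * g ∧ g * h = h * g}.Infinite :=
  have := infinite_units_of_infinite ℂ
  Set.infinite_of_injective_forall_mem (blockScalar_injective e hne h₀ h₁) fun t =>
    ⟨blockScalar_mem_gammaLam e i₁ t, blockScalar_mul_comm e hs i₁ t,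
      blockScalar_mul_comm e hh i₁ t⟩

end Blocks

section CyclicPair

open scoped Fin.NatCast Fin.CommRing

variable {q : ℕ}

theorem pow_fin_val_add {M : Type*} [Monoid M] {ζ : M} (hζ : ζ ^ q = 1) (a b : Fin q) :
    ζ ^ ((a + b : Fin q) : ℕ) = ζ ^ (a : ℕ) * ζ ^ (b : ℕ) := by
  rw [Fin.val_add, ← pow_eq_pow_mod _ hζ, pow_add]

theorem diagZeta_pow (ξ : ℂ) (j : ℕ) : diagZeta q ξ ^ j = diagZeta q (ξ ^ j) := by
  rw [diagZeta, diagZeta, diagonal_pow]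
  congr 1
  funext a
  rw [Pi.pow_apply, ← pow_mul, mul_comm, pow_mul]

theorem isDiag_diagZeta (ξ : ℂ) : (diagZeta q ξ).IsDiag :=
  isDiag_diagonal _

theorem diagZeta_pow_self {ξ : ℂ} (hξ : ξ ^ q = 1) : diagZeta q ξ ^ q = 1 := by
  rw [diagZeta_pow, hξ, diagZeta]
  simp

variable [NeZero q]

theorem pow_fin_val_one {M : Type*} [Monoid M] {ζ : M} (hζ : ζ ^ q = 1) :
    ζ ^ ((1 : Fin q) : ℕ) = ζ := by
  rw [Fin.val_one', ← pow_eq_pow_mod _ hζ, pow_one]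

theorem cycleMat_mul_apply (X : Matrix (Fin q) (Fin q) ℂ) (a b : Fin q) :
    (cycleMat q * X) a b = X (a - 1) b := by
  rw [mul_apply, Finset.sum_eq_single (a - 1)]
  · simp [cycleMat]
  · intro c _ hc
    have : a ≠ c + 1 := fun h => hc (by rw [h, add_sub_cancel_right])
    simp [cycleMat, this]
  · simp

theorem mul_cycleMat_apply (X : Matrix (Fin q) (Fin q) ℂ) (a b : Fin q) :
    (X * cycleMat q) a b = X a (b + 1) := by
  simp [cycleMat, mul_apply]

theorem cycleMat_pow_apply (m : ℕ) (a b : Fin q) :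
    (cycleMat q ^ m) a b = if a = b + m then 1 else 0 := by
  induction m generalizing b with
  | zero => simp [one_apply]
  | succ m ih =>
    rw [pow_succ, mul_cycleMat_apply, ih, Nat.cast_succ, add_comm (m : Fin q), add_assoc]

theorem cycleMat_pow_self : cycleMat q ^ q = 1 := by
  ext a b
  rw [cycleMat_pow_apply, Fin.natCast_self, add_zero, one_apply]

theorem diagZeta_mul_cycleMat {ξ : ℂ} (hξ : ξ ^ q = 1) :
    diagZeta q ξ * cycleMat q = ξ • (cycleMat q * diagZeta q ξ) := by
  ext a b
  rw [diagZeta, diagonal_mul, Matrix.smul_apply, mul_diagonal, cycleMat, of_apply, smul_eq_mul]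
  split_ifs with hab
  · rw [hab, pow_fin_val_add hξ, pow_fin_val_one hξ]
    ring
  · simp

theorem vandermonde_mul_cycleMat {ξ : ℂ} (hξ : ξ ^ q = 1) :
    vandermonde (fun a : Fin q => ξ ^ (a : ℕ)) * cycleMat q =
      diagZeta q ξ * vandermonde (fun a : Fin q => ξ ^ (a : ℕ)) := by
  have hroot : ∀ a : Fin q, (ξ ^ (a : ℕ)) ^ q = 1 := fun a => by
    rw [← pow_mul, mul_comm, pow_mul, hξ, one_pow]
  ext a b
  rw [mul_cycleMat_apply, diagZeta, diagonal_mul, vandermonde_apply, vandermonde_apply,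
    pow_fin_val_add (hroot a), pow_fin_val_one (hroot a), mul_comm]

variable {ξ : ℂ} (hξ : IsPrimitiveRoot ξ q)
include hξ

theorem sub_eq_sub_of_mul_diagZeta_eq_smul {X : Matrix (Fin q) (Fin q) ℂ} {c : ℂ}
    (hD : X * diagZeta q ξ = c • (diagZeta q ξ * X)) {a b a' b' : Fin q} (h : X a b ≠ 0)
    (h' : X a' b' ≠ 0) : a - b = a' - b' := by
  have hentry : ∀ {a b : Fin q}, X a b ≠ 0 → ξ ^ (b : ℕ) = c * ξ ^ (a : ℕ) := fun {a b} h => by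
    have := congrFun₂ hD a b
    rw [diagZeta, mul_diagonal, Matrix.smul_apply, diagonal_mul, smul_eq_mul] at this
    exact mul_left_cancel₀ h (by linear_combination this)
  have hpow : ξ ^ ((b + a' : Fin q) : ℕ) = ξ ^ ((a + b' : Fin q) : ℕ) := by
    rw [pow_fin_val_add hξ.pow_eq_one, pow_fin_val_add hξ.pow_eq_one, hentry h, hentry h']
    ring
  have := Fin.val_injective (hξ.pow_inj (Fin.is_lt _) (Fin.is_lt _) hpow)
  linear_combination -this

omit hξ in
theorem apply_add_natCast_of_mul_cycleMat_eq_smul {X : Matrix (Fin q) (Fin q) ℂ} {c : ℂ}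
    (hW : X * cycleMat q = c • (cycleMat q * X)) (a b : Fin q) (u : ℕ) :
    X (a + u) (b + u) = c ^ u * X a b := by
  induction u with
  | zero => simp
  | succ u ih =>
    have := congrFun₂ hW (a + u + 1) (b + u)
    rw [mul_cycleMat_apply, Matrix.smul_apply, cycleMat_mul_apply, add_sub_cancel_right, ih] at this
    rw [Nat.cast_succ, ← add_assoc, ← add_assoc, this, smul_eq_mul, pow_succ]
    ring

theorem exists_eq_smul_cycleMat_pow_mul_diagZeta_pow {X : Matrix (Fin q) (Fin q) ℂ} (hX : X ≠ 0)
    {c c' : ℂ} (hD : X * diagZeta q ξ = c • (diagZeta q ξ * X))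
    (hW : X * cycleMat q = c' • (cycleMat q * X)) :
    ∃ (t : ℂ) (m j : Fin q), X = t • (cycleMat q ^ (m : ℕ) * diagZeta q ξ ^ (j : ℕ)) := by
  obtain ⟨a₀, b₀, h₀⟩ : ∃ a b, X a b ≠ 0 := by
    by_contra! h
    exact hX (ext h)
  have hshift := apply_add_natCast_of_mul_cycleMat_eq_smul hW (a₀ - b₀) 0
  have ht : X (a₀ - b₀) 0 ≠ 0 := by
    have := hshift b₀
    rw [Fin.cast_val_eq_self, sub_add_cancel, zero_add] at this
    exact right_ne_zero_of_mul (this ▸ h₀)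
  have hc' : c' ^ q = 1 := by
    have := hshift q
    rw [Fin.natCast_self, add_zero, add_zero] at this
    exact (mul_eq_right₀ ht).mp this.symm
  obtain ⟨j, hj, rfl⟩ := hξ.eq_pow_of_pow_eq_one hc'
  refine ⟨X (a₀ - b₀) 0, a₀ - b₀, ⟨j, hj⟩, ?_⟩
  ext a b
  rw [Matrix.smul_apply, diagZeta_pow, diagZeta, mul_diagonal, cycleMat_pow_apply,
    Fin.cast_val_eq_self, smul_eq_mul]
  split_ifs with hab
  · have := hshift b
    rw [Fin.cast_val_eq_self, zero_add, add_comm, ← hab] at this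
    rw [this, Fin.val_mk]
    ring
  · rw [zero_mul, mul_zero]
    by_contra h
    exact hab (by linear_combination sub_eq_sub_of_mul_diagZeta_eq_smul hξ hD h h₀)

end CyclicPair

section RectangularCase

variable {ℓ n : ℕ} {r : Fin ℓ → ℕ} {e : ((i : Fin ℓ) × (Fin (r i) × Fin ((i : ℕ) + 1))) ≃ Fin n}

theorem IsSemisimpleGammaLam.mem_gammaLam {s : PGLn n} (hs : IsSemisimpleGammaLam ℓ r n e s) :
    s ∈ GammaLam ℓ r n e :=
  let ⟨A, hA, _, hAs⟩ := hs
  ⟨A, hA, hAs⟩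

variable (e) in
theorem exists_algHom_range_eq_hlam_of_rectangular (i₀ : Fin ℓ) (hr : ∀ i, i ≠ i₀ → r i = 0) :
    ∃ κ : Matrix (Fin (r i₀)) (Fin (r i₀)) ℂ →ₐ[ℂ] Matrix (Fin n) (Fin n) ℂ, Injective κ ∧
      (∀ x, x.IsDiag → (κ x).IsDiag) ∧ Set.range κ = Hlam ℓ r n e := by
  have hsub : ∀ i, i ≠ i₀ → Subsingleton (Matrix (Fin (r i)) (Fin (r i)) ℂ) := fun i hi => by
    rw [hr i hi]
    infer_instance
  have hbij : Bijective (Pi.evalAlgHom ℂ (fun i => Matrix (Fin (r i)) (Fin (r i)) ℂ) i₀) := by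
    refine ⟨fun x y hxy => funext fun i => ?_, fun y => ⟨Pi.mulSingle i₀ y, by simp⟩⟩
    by_cases hi : i = i₀
    · subst hi
      exact hxy
    · exact (hsub i hi).elim _ _
  let E := AlgEquiv.ofBijective _ hbij
  refine ⟨(blockKronAlgHom e).comp E.symm.toAlgHom, (blockKronAlgHom_injective e).comp
    E.symm.injective, fun x hx => isDiag_blockKronAlgHom e fun i => ?_, ?_⟩
  · change (E.symm x i).IsDiag
    by_cases hi : i = i₀
    · rw [hi, show E.symm x i₀ = x from E.apply_symm_apply x]
      exact hx
    · rw [(hsub i hi).elim (E.symm x i) 0]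
      exact isDiag_zero
  · exact (E.symm.surjective.range_comp (blockKronAlgHom e)).trans (range_blockKronAlgHom e)

variable {q : ℕ} {κ : Matrix (Fin q) (Fin q) ℂ →ₐ[ℂ] Matrix (Fin n) (Fin n) ℂ}

theorem isSemisimpleGammaLam_pglMap (hrange : Set.range κ = Hlam ℓ r n e)
    (hdiag : ∀ x, x.IsDiag → (κ x).IsDiag) {u V : GL (Fin q) ℂ}
    (hu : ((V * u * V⁻¹ : GL (Fin q) ℂ) : Matrix (Fin q) (Fin q) ℂ).IsDiag) :
    IsSemisimpleGammaLam ℓ r n e (pglMap κ u) :=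
  ⟨Units.map κ.toMonoidHom u, hrange ▸ Set.mem_range_self _,
    ⟨Units.map κ.toMonoidHom V, by rw [← map_inv, ← map_mul, ← map_mul]; exact hdiag _ hu⟩, rfl⟩

variable [NeZero q]

theorem finite_centralizer_pglMap (hκ : Injective κ) {ξ : ℂ} (hξ : IsPrimitiveRoot ξ q)
    {D W : GL (Fin q) ℂ} (hD : (D : Matrix (Fin q) (Fin q) ℂ) = diagZeta q ξ)
    (hW : (W : Matrix (Fin q) (Fin q) ℂ) = cycleMat q) :
    {g : PGLn n | (∃ B : GL (Fin n) ℂ, (B : Matrix (Fin n) (Fin n) ℂ) ∈ Set.range κ ∧ mk B = g) ∧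
      g * pglMap κ D = pglMap κ D * g ∧ g * pglMap κ W = pglMap κ W * g}.Finite := by
  have := hκ.nontrivial
  refine (Set.finite_range fun mj : Fin q × Fin q =>
    pglMap κ (W ^ (mj.1 : ℕ) * D ^ (mj.2 : ℕ))).subset ?_
  rintro _ ⟨⟨B, ⟨X, hX⟩, rfl⟩, hgD, hgW⟩
  have hX0 : X ≠ 0 := by
    rintro rfl
    exact B.ne_zero (by rw [← hX, map_zero])
  have hcomm : ∀ {U : GL (Fin q) ℂ}, mk B * pglMap κ U = pglMap κ U * mk B →
      ∃ c : ℂ, X * U = c • ((U : Matrix (Fin q) (Fin q) ℂ) * X) := fun {U} hU => by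
    obtain ⟨c, hc⟩ := mk_mul_comm_iff_exists_mul_eq_smul.mp hU
    exact ⟨c, hκ (by rw [map_mul, map_smul, map_mul, hX]; exact hc)⟩
  obtain ⟨c, hc⟩ := hcomm hgD
  obtain ⟨c', hc'⟩ := hcomm hgW
  rw [hD] at hc
  rw [hW] at hc'
  obtain ⟨t, m, j, hXt⟩ := exists_eq_smul_cycleMat_pow_mul_diagZeta_pow hξ hX0 hc hc'
  refine ⟨(m, j), (mk_eq_mk_iff_exists_val_eq_smul.mpr ⟨t, ?_⟩).symm⟩
  rw [← hX, hXt, map_smul, ← hW, ← hD]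
  simp

variable (e) in
theorem exists_semisimple_pair_of_range_eq (hκ : Injective κ)
    (hdiag : ∀ x, x.IsDiag → (κ x).IsDiag) (hrange : Set.range κ = Hlam ℓ r n e) :
    ∃ s h : PGLn n, IsSemisimpleGammaLam ℓ r n e s ∧ IsSemisimpleGammaLam ℓ r n e h ∧
      s * h = h * s ∧
      {g : PGLn n | g ∈ GammaLam ℓ r n e ∧ g * s = s * g ∧ g * h = h * g}.Finite := by
  obtain ⟨ξ, hξ⟩ : ∃ ξ : ℂ, IsPrimitiveRoot ξ q := ⟨_, Complex.isPrimitiveRoot_exp q (NeZero.ne q)⟩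
  obtain ⟨D, hD⟩ := IsUnit.of_pow_eq_one (diagZeta_pow_self hξ.pow_eq_one) (NeZero.ne q)
  obtain ⟨W, hW⟩ := IsUnit.of_pow_eq_one (cycleMat_pow_self (q := q)) (NeZero.ne q)
  obtain ⟨V, hV⟩ : IsUnit (vandermonde fun a : Fin q => ξ ^ (a : ℕ)) :=
    (isUnit_iff_isUnit_det _).mpr <| Ne.isUnit <| det_vandermonde_ne_zero_iff.mpr fun a b h =>
      Fin.val_injective (hξ.pow_inj a.is_lt b.is_lt h)
  have hVW : V * W * V⁻¹ = D := mul_inv_eq_of_eq_mul <| Units.ext <| by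
    simp only [Units.val_mul, hV, hW, hD]
    exact vandermonde_mul_cycleMat hξ.pow_eq_one
  refine ⟨pglMap κ D, pglMap κ W, isSemisimpleGammaLam_pglMap hrange hdiag (V := 1) ?_,
    isSemisimpleGammaLam_pglMap hrange hdiag (V := V) ?_,
    mk_mul_comm_iff_exists_mul_eq_smul.mpr ⟨ξ, ?_⟩, ?_⟩
  · simpa [hD] using isDiag_diagZeta ξ
  · rw [hVW, hD]
    exact isDiag_diagZeta ξ
  · change κ D * κ W = ξ • (κ W * κ D)
    rw [← map_mul, ← map_mul, ← map_smul, hD, hW, diagZeta_mul_cycleMat hξ.pow_eq_one]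
  · simpa only [GammaLam, ← hrange, Set.mem_ofPred_eq] using finite_centralizer_pglMap hκ hξ hD hW

end RectangularCase

open Kronecker in
/-- Let `n ≥ 1` and let `λ` be a partition of `n` with part `i` occurring
`r_i` times.  Then `Γ(λ) ⊆ PGL_n(ℂ)` contains a pair `(s,h)` of commuting semisimple
elements with finite simultaneous centralizer `{g ∈ Γ(λ) : gs = sg and gh = hg}` iff exactly
one `r_i` is nonzero, i.e. `λ` is rectangular.  Moreover, when `λ = (k, …, k)` with `ρ`
parts (so `N = kρ`), the group `Γ(λ)` is isomorphic to `PGL_ρ(ℂ)`. -/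
theorem stmt8 (ℓ n : ℕ) (hn1 : 1 ≤ n) (r : Fin ℓ → ℕ)
    (hn : ∑ i : Fin ℓ, ((i : ℕ) + 1) * r i = n)
    (e : ((i : Fin ℓ) × (Fin (r i) × Fin ((i : ℕ) + 1))) ≃ Fin n) :
    ((∃ s h : PGLn n,
        IsSemisimpleGammaLam ℓ r n e s ∧ IsSemisimpleGammaLam ℓ r n e h ∧
        s * h = h * s ∧
        Set.Finite {g : PGLn n | g ∈ GammaLam ℓ r n e ∧ g * s = s * g ∧ g * h = h * g})
      ↔ ∃! i : Fin ℓ, r i ≠ 0)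
    ∧ (∀ (k ρ N : ℕ), 1 ≤ k → 1 ≤ ρ → N = k * ρ →
        ∀ e' : (Fin ρ × Fin k) ≃ Fin N,
          Nonempty (↥(Subgroup.closure {p : PGLn N | ∃ A : GL (Fin N) ℂ,
              ((A : Matrix (Fin N) (Fin N) ℂ) ∈ Set.range
                fun x : Matrix (Fin ρ) (Fin ρ) ℂ =>
                  Matrix.reindex e' e' (x ⊗ₖ (1 : Matrix (Fin k) (Fin k) ℂ))) ∧
              QuotientGroup.mk A = p}) ≃* PGLn ρ)) := by
  refine ⟨⟨fun ⟨s, h, hs, hh, _, hfin⟩ => ?_, fun ⟨i₀, hi₀, huniq⟩ => ?_⟩, ?_⟩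
  · obtain ⟨i₀, -, hi₀⟩ := Finset.exists_ne_zero_of_sum_ne_zero (hn ▸ Nat.one_le_iff_ne_zero.mp hn1)
    refine ⟨i₀, right_ne_zero_of_mul hi₀, fun i₁ hi₁ => by_contra fun hne => ?_⟩
    exact infinite_centralizer_of_two_parts e (Ne.symm hne) (right_ne_zero_of_mul hi₀) hi₁
      hs.mem_gammaLam hh.mem_gammaLam hfin
  · have : NeZero (r i₀) := ⟨hi₀⟩
    obtain ⟨κ, hκ, hdiag, hrange⟩ := exists_algHom_range_eq_hlam_of_rectangular e i₀
      fun i hi => by_contra fun h => hi (huniq i h)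
    exact exists_semisimple_pair_of_range_eq e hκ hdiag hrange
  · intro k ρ N hk _ _ e'
    have : Nonempty (Fin k) := ⟨⟨0, hk⟩⟩
    exact nonempty_closure_mk_mem_range_mulEquiv
      (κ := (reindexAlgEquiv ℂ ℂ e').toAlgHom.comp (kroneckerOneAlgHom ℂ (Fin ρ) (Fin k)))
      ((reindexAlgEquiv ℂ ℂ e').injective.comp (kroneckerOneAlgHom_injective (R := ℂ)))
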